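/- arXiv:0708.1695 — 10 statements merged into one kernel-verified Lean document; each statement's English description precedes it below -/
import Mathlib

section
/- Let w be a permutation of [n] and i ∈ [n-1] with w_i = k and w_{i+1} = k+1. Then δ_k ∘ w ∘ σ̂_i = δ_{k+1} ∘ w ∘ σ̂_{i+1} as functions [n-1] → [n-1]. -/
namespace Fin

lemma succAbove_castSucc_eq_succAbove_succ {n : ℕ} {p i : Fin n} (h : i ≠ p) :
    p.castSucc.succAbove i = p.succ.succAbove i := by
  rcases h.lt_or_gt with hip | hpi
  · rw [succAbove_castSucc_of_lt _ _ hip, succAbove_succ_of_le _ _ hip.le]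
  · rw [succAbove_castSucc_of_le _ _ hpi.le, succAbove_succ_of_lt _ _ hpi]

/-- `p.castSucc.predAbove` and `p.succ.predAbove` collapse `{p, p + 1}` and `{p + 1, p + 2}`
respectively, so they agree away from `p + 1`. -/
lemma predAbove_castSucc_eq_predAbove_succ {n : ℕ} {p : Fin n} {a : Fin (n + 2)}
    (h : a ≠ p.castSucc.succ) : p.castSucc.predAbove a = p.succ.predAbove a := by
  simp only [predAbove, ne_eq, Fin.ext_iff, Fin.lt_def, val_castSucc, val_succ] at h ⊢
  split_ifs <;> simp only [val_pred, coe_castPred] <;> omega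

end Fin

/-- If `w i = k` and `w (i+1) = k + 1`, then
`δ_k ∘ w ∘ σ̂_i = δ_{k+1} ∘ w ∘ σ̂_{i+1} : [n-1] → [n-1]`. -/
theorem stmt7 (n : ℕ) (w : Equiv.Perm (Fin (n + 2))) (i : Fin (n + 1)) (k : Fin n)
    (h1 : w i.castSucc = k.castSucc.castSucc) (h2 : w i.succ = k.castSucc.succ)
    (x : Fin (n + 1)) :
    k.castSucc.predAbove (w (i.castSucc.succAbove x)) =
      k.succ.predAbove (w (i.succ.succAbove x)) := by
  rcases eq_or_ne x i with rfl | hx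
  · rw [Fin.succAbove_castSucc_self, Fin.succAbove_succ_self, h1, h2, Fin.predAbove_succ_self,
      Fin.predAbove_castSucc_of_le _ _ Fin.castSucc_lt_succ.le]
  · rw [Fin.succAbove_castSucc_eq_succAbove_succ hx]
    apply Fin.predAbove_castSucc_eq_predAbove_succ
    rw [← h2]
    exact w.injective.ne (Fin.succAbove_ne _ _)
end

section
/- Let w be a permutation of [n], i ∈ [n-1] with w_i = k and w_{i+1} = k+1, and let ψ = δ_k ∘ w ∘ σ̂_i. Then for j ∈ [n-2], j is an ascent of ψ (i.e. ψ(j) < ψ(j+1)) if and only if σ̂_i(j) is an ascent of w (i.e. w(σ̂_i(j)) < w(σ̂_i(j)+1)). -/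
/-!
`δ_k` preserves and reflects the order of every pair except `(k, k+1)`, and `w` takes the
values `(k, k+1)` only at the positions `(i, i+1)`, while `σ̂_i(j) ≠ i`. So it suffices
that `ψ(j+1) = δ_k(w(σ̂_i(j) + 1))`: this is clear unless `σ̂_i` jumps over `i` between `j` and
`j+1`, and then both sides equal `δ_k(k+1) = δ_k(k) = k`.
-/

namespace Fin

theorem predAbove_lt_predAbove_iff {n : ℕ} (k : Fin (n + 1)) {x y : Fin (n + 2)}
    (h : ¬(x = k.castSucc ∧ y = k.succ)) :
    k.predAbove x < k.predAbove y ↔ x < y := by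
  rw [Fin.ext_iff, Fin.ext_iff] at h
  simp only [predAbove, lt_def, val_castSucc, val_succ] at *
  split_ifs <;> simp only [val_pred, coe_castPred] <;> omega

theorem castSucc_succAbove_succ_eq_or {n : ℕ} (i : Fin (n + 1)) (j : Fin n) :
    i.castSucc.succAbove j.succ = i.castSucc.succAbove j.castSucc + 1 ∨
      i.castSucc.succAbove j.castSucc + 1 = i.castSucc ∧
        i.castSucc.succAbove j.succ = i.succ := by
  simp only [Fin.ext_iff, succAbove, lt_def, val_add_one, val_castSucc, val_succ, val_last]
  split_ifs <;> simp_all <;> omega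

end Fin

/-- With `w i = k`, `w (i+1) = k+1` and `ψ = δ_k ∘ w ∘ σ̂_i`, for `j ∈ [n-2]`:
`j` is an ascent of `ψ` iff `σ̂_i(j)` is an ascent of `w`. -/
theorem stmt8 (n : ℕ) (w : Equiv.Perm (Fin (n + 2))) (i k : Fin (n + 1))
    (h1 : w i.castSucc = k.castSucc) (h2 : w i.succ = k.succ) (j : Fin n) :
    k.predAbove (w (i.castSucc.succAbove j.castSucc)) <
        k.predAbove (w (i.castSucc.succAbove j.succ)) ↔
      w (i.castSucc.succAbove j.castSucc) < w (i.castSucc.succAbove j.castSucc + 1) := by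
  set a := i.castSucc.succAbove j.castSucc
  have hpair : ¬(w a = k.castSucc ∧ w (a + 1) = k.succ) := fun ⟨hwa, _⟩ ↦
    Fin.succAbove_ne _ _ (w.injective (hwa.trans h1.symm))
  have hnext : k.predAbove (w (i.castSucc.succAbove j.succ)) = k.predAbove (w (a + 1)) := by
    rcases i.castSucc_succAbove_succ_eq_or j with hsucc | ⟨hgap, hjump⟩
    · rw [hsucc]
    · rw [hgap, hjump, h1, h2, Fin.predAbove_succ_self, Fin.predAbove_castSucc_self]
  rw [hnext]
  exact k.predAbove_lt_predAbove_iff hpair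
end

section
/- Let u be a permutation of [n-1] and k ∈ [n-1]. Then there exists a unique pair (w, i) where w is a permutation of [n], i ∈ [n-1], w_i = k, w_{i+1} = k+1, and δ_k ∘ w ∘ σ̂_i = u. Explicitly, i is the unique index with u(i) = k, and w(j) = k if j = i, w(j) = σ̂_k(u(δ_i(j))) otherwise. -/
/-!
The value `k` of `u` is doubled into the adjacent values `k, k + 1` of `w`, sitting at the
adjacent positions `i, i + 1` where `i = u⁻¹ k`. Conversely, the conditions force `u i = k`
(evaluate `δ_k ∘ w ∘ σ̂_i` at `i`), and off position `i` the value `w j ≠ k` is recovered from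
`δ_k (w j) = u (δ_i j)` because `σ̂_k` inverts `δ_k` away from `k`.
-/

open Fin

namespace Equiv.Perm

variable {n : ℕ}

def expandValue (u : Perm (Fin (n + 1))) (k : Fin (n + 1)) : Perm (Fin (n + 2)) where
  toFun j := if j = (u.symm k).castSucc then k.castSucc
    else k.castSucc.succAbove (u ((u.symm k).predAbove j))
  invFun j := if j = k.castSucc then (u.symm k).castSucc
    else (u.symm k).castSucc.succAbove (u.symm (k.predAbove j))
  left_inv j := by
    by_cases h : j = (u.symm k).castSucc
    · simp [h]
    · simp only [if_neg h, if_neg (succAbove_ne _ _), predAbove_succAbove,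
        symm_apply_apply, succAbove_predAbove h]
  right_inv j := by
    by_cases h : j = k.castSucc
    · simp [h]
    · simp only [if_neg h, if_neg (succAbove_ne _ _), predAbove_succAbove,
        apply_symm_apply, succAbove_predAbove h]

def IsExpansion (u : Perm (Fin (n + 1))) (k : Fin (n + 1)) (w : Perm (Fin (n + 2)))
    (i : Fin (n + 1)) : Prop :=
  w i.castSucc = k.castSucc ∧ w i.succ = k.succ ∧
    ∀ x, k.predAbove (w (i.castSucc.succAbove x)) = u x

variable {u : Perm (Fin (n + 1))} {k : Fin (n + 1)}

theorem expandValue_apply (j : Fin (n + 2)) :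
    expandValue u k j = if j = (u.symm k).castSucc then k.castSucc
      else k.castSucc.succAbove (u ((u.symm k).predAbove j)) := rfl

theorem isExpansion_expandValue : IsExpansion u k (expandValue u k) (u.symm k) := by
  refine ⟨?_, ?_, fun x => ?_⟩
  · rw [expandValue_apply, if_pos rfl]
  · rw [expandValue_apply, if_neg castSucc_lt_succ.ne', predAbove_succ_self,
      apply_symm_apply, succAbove_castSucc_self]
  · rw [expandValue_apply, if_neg (succAbove_ne _ _), predAbove_succAbove, predAbove_succAbove]

namespace IsExpansion

variable {w : Perm (Fin (n + 2))} {i : Fin (n + 1)}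

theorem apply_eq (h : IsExpansion u k w i) : u i = k := by
  have hi := h.2.2 i
  rwa [succAbove_castSucc_self, h.2.1, predAbove_succ_self, eq_comm] at hi

theorem apply_of_ne (h : IsExpansion u k w i) {j : Fin (n + 2)} (hj : j ≠ i.castSucc) :
    w j = k.castSucc.succAbove (u (i.predAbove j)) := by
  have hwj : w j ≠ k.castSucc := fun hk => hj (w.injective (hk.trans h.1.symm))
  rw [← h.2.2 (i.predAbove j), succAbove_predAbove hj, succAbove_predAbove hwj]

theorem eq_expandValue (h : IsExpansion u k w i) : w = expandValue u k ∧ i = u.symm k := by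
  have hi : i = u.symm k := by rw [← h.apply_eq, symm_apply_apply]
  subst hi
  refine ⟨Equiv.ext fun j => ?_, rfl⟩
  rw [expandValue_apply]
  split_ifs with hj
  · rw [hj, h.1]
  · exact h.apply_of_ne hj

end IsExpansion

end Equiv.Perm

open Equiv.Perm in
/-- Given a permutation `u` of `[n-1]` and `k ∈ [n-1]`, there exists a unique pair
`(w, i)` with `w` a permutation of `[n]`, `i ∈ [n-1]`, `w i = k`, `w (i+1) = k+1` and
`δ_k ∘ w ∘ σ̂_i = u`.  Explicitly, `i` is the unique index with `u i = k`, and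
`w j = k` for `j = i`, `w j = σ̂_k (u (δ_i j))` otherwise. -/
theorem stmt9 (n : ℕ) (u : Equiv.Perm (Fin (n + 1))) (k : Fin (n + 1)) :
    (∃! p : Equiv.Perm (Fin (n + 2)) × Fin (n + 1),
      p.1 p.2.castSucc = k.castSucc ∧ p.1 p.2.succ = k.succ ∧
        ∀ x, k.predAbove (p.1 (p.2.castSucc.succAbove x)) = u x) ∧
    ∀ (w : Equiv.Perm (Fin (n + 2))) (i : Fin (n + 1)),
      (w i.castSucc = k.castSucc ∧ w i.succ = k.succ ∧
          ∀ x, k.predAbove (w (i.castSucc.succAbove x)) = u x) →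
        (u i = k ∧ ∀ j : Fin (n + 2), j ≠ i.castSucc →
          w j = k.castSucc.succAbove (u (i.predAbove j))) := by
  refine ⟨⟨(expandValue u k, u.symm k), isExpansion_expandValue, ?_⟩, ?_⟩
  · rintro ⟨w, i⟩ h
    obtain ⟨rfl, rfl⟩ := IsExpansion.eq_expandValue h
    rfl
  · intro w i h
    exact ⟨IsExpansion.apply_eq h, fun j => IsExpansion.apply_of_ne h⟩
end

section
/- The map sending a pair (w,i) — with w a permutation of [n], i ∈ [n-1], w_i = k, w_{i+1} = k+1 — to the permutation δ_k ∘ w ∘ σ̂_i of [n-1] is an isomorphism of partial orders, where pairs are ordered by: (w,i) ≤ (w',i) iff w ≤ w' in the weak Bruhat (left inversion) order and both satisfy the constraint; equivalently, the derived lattice Cov(S_n, (⊥, σ_k)) of the permutohedron S_n at the atomic cover given by σ_k is isomorphic to the permutohedron S_{n-1}. -/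
/-!
Removing the value `k` of `w` at position `i` (and closing both gaps) gives a permutation `u`
of `[n-1]` with `δ_k ∘ w = u ∘ δ_i`, where `δ_k = Fin.predAbove k` identifies `k` with `k + 1`.
Since `δ_k` is monotone, and the only pair it identifies, `(k, k + 1)`, is not an inversion of
`w`, the inversion set of `w` is the preimage of that of `u` under `δ_k × δ_k`. As `δ_k` is
surjective, inclusions of inversion sets are both preserved and reflected. Conversely, `u`
comes from the unique cover with `i = u⁻¹ k`, obtained by inserting the value `k` back at `i`.
-/

def inversions {m : ℕ} (w : Equiv.Perm (Fin m)) : Set (Fin m × Fin m) :=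
  {p | p.1 < p.2 ∧ w⁻¹ p.2 < w⁻¹ p.1}

namespace Fin

theorem eq_castSucc_and_eq_succ_of_predAbove_eq {m : ℕ} {p : Fin m} {a b : Fin (m + 1)}
    (hab : a < b) (h : p.predAbove a = p.predAbove b) : a = p.castSucc ∧ b = p.succ := by
  simp only [predAbove, Fin.ext_iff, lt_def, val_castSucc, val_succ] at *
  split_ifs at h <;> simp only [val_pred, coe_castPred] at h <;> omega

end Fin

namespace Equiv.Perm

open Fin

variable {m : ℕ}

theorem succAbove_predAbove_apply_succAbove {w : Perm (Fin (m + 1))} {i k : Fin m}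
    (h : w i.castSucc = k.castSucc) (x : Fin m) :
    k.castSucc.succAbove (k.predAbove (w (i.castSucc.succAbove x))) =
      w (i.castSucc.succAbove x) :=
  succAbove_predAbove fun hx => succAbove_ne _ x (w.injective (hx.trans h.symm))

noncomputable def removeNth (w : Perm (Fin (m + 1))) (i k : Fin m)
    (h : w i.castSucc = k.castSucc) : Perm (Fin m) :=
  ofBijective (fun x => k.predAbove (w (i.castSucc.succAbove x))) <|
    Finite.injective_iff_bijective.1 fun x y hxy => by
      have := congrArg k.castSucc.succAbove hxy
      rw [succAbove_predAbove_apply_succAbove h, succAbove_predAbove_apply_succAbove h] at this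
      exact succAbove_right_injective (w.injective this)

def insertNth (i k : Fin (m + 1)) (u : Perm (Fin m)) : Perm (Fin (m + 1)) :=
  (finSuccEquiv' i).trans ((optionCongr u).trans (finSuccEquiv' k).symm)

theorem insertNth_apply_self (i k : Fin (m + 1)) (u : Perm (Fin m)) : insertNth i k u i = k := by
  simp [insertNth]

theorem insertNth_apply_succAbove (i k : Fin (m + 1)) (u : Perm (Fin m)) (x : Fin m) :
    insertNth i k u (i.succAbove x) = k.succAbove (u x) := by
  simp [insertNth]

section removeNth

variable {w : Perm (Fin (m + 1))} {i k : Fin m} (h : w i.castSucc = k.castSucc)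

theorem removeNth_apply (x : Fin m) :
    removeNth w i k h x = k.predAbove (w (i.castSucc.succAbove x)) :=
  rfl

theorem succAbove_removeNth_apply (x : Fin m) :
    k.castSucc.succAbove (removeNth w i k h x) = w (i.castSucc.succAbove x) :=
  succAbove_predAbove_apply_succAbove h x

theorem removeNth_apply_self (h' : w i.succ = k.succ) : removeNth w i k h i = k := by
  rw [removeNth_apply, succAbove_castSucc_self, h', predAbove_succ_self]

theorem predAbove_apply_eq_removeNth (h' : w i.succ = k.succ) (j : Fin (m + 1)) :
    k.predAbove (w j) = removeNth w i k h (i.predAbove j) := by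
  by_cases hj : j = i.castSucc
  · rw [hj, h, predAbove_castSucc_self, predAbove_castSucc_self, removeNth_apply_self h h']
  · rw [removeNth_apply, succAbove_predAbove hj]

theorem predAbove_inv_apply_eq_removeNth_inv (h' : w i.succ = k.succ) (y : Fin (m + 1)) :
    i.predAbove (w⁻¹ y) = (removeNth w i k h)⁻¹ (k.predAbove y) := by
  rw [eq_comm, inv_eq_iff_eq, ← predAbove_apply_eq_removeNth h h', ← mul_apply, mul_inv_cancel,
    one_apply]

theorem inversions_eq_preimage_removeNth (h' : w i.succ = k.succ) :
    inversions w = Prod.map k.predAbove k.predAbove ⁻¹' inversions (removeNth w i k h) := by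
  ext ⟨a, b⟩
  simp only [inversions, Set.mem_preimage, Set.mem_ofPred_eq, Prod.map_fst, Prod.map_snd,
    ← predAbove_inv_apply_eq_removeNth_inv h h']
  constructor
  · rintro ⟨hab, hw⟩
    have hne : k.predAbove a ≠ k.predAbove b := fun he => by
      obtain ⟨rfl, rfl⟩ := eq_castSucc_and_eq_succ_of_predAbove_eq hab he
      rw [inv_eq_iff_eq.2 h.symm, inv_eq_iff_eq.2 h'.symm] at hw
      exact castSucc_lt_succ.not_gt hw
    refine ⟨(predAbove_right_monotone k hab.le).lt_of_ne hne,
      (predAbove_right_monotone i hw.le).lt_of_ne fun he => hne ?_⟩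
    rw [predAbove_inv_apply_eq_removeNth_inv h h', predAbove_inv_apply_eq_removeNth_inv h h']
      at he
    exact ((removeNth w i k h)⁻¹.injective he).symm
  · rintro ⟨hab, hw⟩
    exact ⟨(predAbove_right_monotone k).reflect_lt hab, (predAbove_right_monotone i).reflect_lt hw⟩

end removeNth

theorem removeNth_insertNth (i k : Fin m) (u : Perm (Fin m)) :
    removeNth (insertNth i.castSucc k.castSucc u) i k (insertNth_apply_self _ _ u) = u := by
  ext x
  rw [removeNth_apply, insertNth_apply_succAbove, predAbove_succAbove]

theorem insertNth_removeNth {w : Perm (Fin (m + 1))} {i k : Fin m}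
    (h : w i.castSucc = k.castSucc) : insertNth i.castSucc k.castSucc (removeNth w i k h) = w := by
  ext j : 1
  by_cases hj : j = i.castSucc
  · rw [hj, insertNth_apply_self, h]
  · obtain ⟨x, rfl⟩ := exists_succAbove_eq hj
    rw [insertNth_apply_succAbove, succAbove_removeNth_apply]

end Equiv.Perm

open Equiv Perm

/-- The pair `(w, i)` stands for the cover `w ⋖ w ∘ σ_i` of `S_{m+1}`, perspective to the atomic
cover `(⊥, σ_k)`. -/
abbrev PerspectiveCover {m : ℕ} (k : Fin m) :=
  {p : Perm (Fin (m + 1)) × Fin m // p.1 p.2.castSucc = k.castSucc ∧ p.1 p.2.succ = k.succ}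

noncomputable def perspectiveCoverEquiv {m : ℕ} (k : Fin m) :
    PerspectiveCover k ≃ Perm (Fin m) where
  toFun p := removeNth p.1.1 p.1.2 k p.2.1
  invFun u := ⟨(insertNth (u⁻¹ k).castSucc k.castSucc u, u⁻¹ k), insertNth_apply_self _ _ u, by
    rw [← Fin.succAbove_castSucc_self, insertNth_apply_succAbove, ← mul_apply, mul_inv_cancel,
      one_apply, Fin.succAbove_castSucc_self]⟩
  left_inv := by
    rintro ⟨⟨w, i⟩, h, h'⟩
    have hi : (removeNth w i k h)⁻¹ k = i := inv_eq_iff_eq.2 (removeNth_apply_self h h').symm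
    ext : 2
    · exact (congrArg (fun j => insertNth j.castSucc _ _) hi).trans (insertNth_removeNth h)
    · exact hi
  right_inv u := removeNth_insertNth _ k u

theorem inversions_subset_iff_perspectiveCoverEquiv {m : ℕ} {k : Fin m}
    (p q : PerspectiveCover k) :
    inversions p.1.1 ⊆ inversions q.1.1 ↔
      inversions (perspectiveCoverEquiv k p) ⊆ inversions (perspectiveCoverEquiv k q) := by
  rw [inversions_eq_preimage_removeNth p.2.1 p.2.2, inversions_eq_preimage_removeNth q.2.1 q.2.2]
  exact ((Fin.predAbove_surjective k).prodMap (Fin.predAbove_surjective k)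
    ).preimage_subset_preimage_iff

/-- The map `(w, i) ↦ δ_k ∘ w ∘ σ̂_i`, defined on the covers of the permutohedron `S_n`
perspective to the atomic cover `(⊥, σ_k)` (i.e. pairs with `w i = k`, `w (i+1) = k+1`),
is a bijection onto `S_{n-1}` which preserves and reflects the weak Bruhat order
(inclusion of inversion sets): the derived lattice `Cov(S_n, (⊥, σ_k))` is isomorphic
to `S_{n-1}`. -/
theorem stmt10 (n : ℕ) (k : Fin (n + 1)) :
    ∃ ψ : {p : Equiv.Perm (Fin (n + 2)) × Fin (n + 1) //
            p.1 p.2.castSucc = k.castSucc ∧ p.1 p.2.succ = k.succ} →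
          Equiv.Perm (Fin (n + 1)),
      Function.Bijective ψ ∧
      (∀ p x, ψ p x = k.predAbove (p.1.1 (p.1.2.castSucc.succAbove x))) ∧
      (∀ p q, inversions p.1.1 ⊆ inversions q.1.1 ↔ inversions (ψ p) ⊆ inversions (ψ q)) :=
  ⟨perspectiveCoverEquiv k, (perspectiveCoverEquiv k).bijective, fun _ _ => rfl,
    inversions_subset_iff_perspectiveCoverEquiv⟩
end

section
/- Let D be the inversion set of a permutation w of [n] and k ∈ [n-1]. Then D' = {(a,b) ∈ D : [k,k+1] ⊄ [a,b]} (i.e. those (a,b) with a < b not satisfying a ≤ k and k+1 ≤ b) is itself the inversion set of some permutation of [n]. -/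
open Function

theorem exists_perm_lt_iff_lt_of_injective {α : Type*} [LinearOrder α] {n : ℕ} {f : Fin n → α}
    (hf : Injective f) : ∃ σ : Equiv.Perm (Fin n), ∀ a b, σ a < σ b ↔ f a < f b := by
  have hsorted : StrictMono (f ∘ Tuple.sort f) :=
    (Tuple.monotone_sort f).strictMono_of_injective (hf.comp (Tuple.sort f).injective)
  refine ⟨(Tuple.sort f)⁻¹, fun a b => ?_⟩
  simpa using (hsorted.lt_iff_lt (a := (Tuple.sort f)⁻¹ a) (b := (Tuple.sort f)⁻¹ b)).symm

theorem exists_inversions_eq_of_injective {α : Type*} [LinearOrder α] {n : ℕ} {f : Fin n → α}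
    (hf : Injective f) :
    ∃ w : Equiv.Perm (Fin n), inversions w = {p | p.1 < p.2 ∧ f p.2 < f p.1} := by
  obtain ⟨σ, hσ⟩ := exists_perm_lt_iff_lt_of_injective hf
  exact ⟨σ⁻¹, by ext p; simp [inversions, hσ]⟩

/-- If `D` is the inversion set of a permutation `w` of `[n]`, then
`D' = {(a,b) ∈ D : [k,k+1] ⊄ [a,b]}` is again the inversion set of some permutation. -/
theorem stmt11 (n : ℕ) (w : Equiv.Perm (Fin n)) (k : Fin n) :
    ∃ w' : Equiv.Perm (Fin n),
      inversions w' =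
        {p ∈ inversions w | ¬((p.1 : ℕ) ≤ (k : ℕ) ∧ (k : ℕ) + 1 ≤ (p.2 : ℕ))} := by
  let key : Fin n → Bool ×ₗ Fin n := fun a => toLex (decide (k < a), w⁻¹ a)
  have hkey : Injective key := fun a b h => w⁻¹.injective (congrArg (fun x => (ofLex x).2) h)
  obtain ⟨w', hw'⟩ := exists_inversions_eq_of_injective hkey
  refine ⟨w', hw'.trans ?_⟩
  ext ⟨a, b⟩
  simp only [key, inversions, Set.mem_ofPred_eq, Prod.Lex.toLex_lt_toLex]
  by_cases ha : k < a <;> by_cases hb : k < b <;> simp [ha, hb]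
  grind
end

section
/- For k ∈ [n-1], the quotient of the permutohedron S_n by the lattice congruence generated by the pair (identity, σ_k) is isomorphic as a lattice to the product S_k × S_{n-k}. -/
/-- A lattice congruence: an equivalence relation compatible with joins and meets. -/
def IsLatticeCongruence {α : Type*} [Lattice α] (r : α → α → Prop) : Prop :=
  Equivalence r ∧ (∀ a b c d, r a b → r c d → r (a ⊔ c) (b ⊔ d)) ∧
    (∀ a b c d, r a b → r c d → r (a ⊓ c) (b ⊓ d))

/-- The smallest lattice congruence identifying `x` and `y`. -/
def congGen {α : Type*} [Lattice α] (x y : α) (a b : α) : Prop :=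
  ∀ r : α → α → Prop, IsLatticeCongruence r → r x y → r a b

/-!
Restricting a permutation to the values `< k` and to the values `≥ k` is a map
`S_n → S_k × S_{n-k}` with a lower adjoint (direct sum) and an upper adjoint (skew sum), so it
preserves joins and meets; it also identifies `1` with `σ_k`, whose only inversion crosses the
blocks. Conversely, let `r` be a congruence with `1 ≡ σ_k` and let `w` be the skew sum of the
identities, whose inversions are exactly the crossing pairs `i < k ≤ j`. If `ρ` reverses both
blocks, then `ρ ⊓ w = 1` while `w ≤ ρ ⊔ σ_k` by transitivity of inversion sets, so
`1 ≡ w`. Joining with `a` gives `a ≡ a ⊔ w`, and `a ⊔ w` is the top of the fibre of `a`.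
-/

open Equiv Function

section Inversions

variable {m : ℕ}

lemma mem_inversions {w : Perm (Fin m)} {a b : Fin m} :
    (a, b) ∈ inversions w ↔ a < b ∧ w⁻¹ b < w⁻¹ a :=
  Iff.rfl

lemma inversions_one : inversions (1 : Perm (Fin m)) = ∅ := by
  ext ⟨a, b⟩
  simp only [inversions, inv_one, Perm.one_apply, Set.mem_ofPred_eq, Set.mem_empty_iff_false,
    iff_false, not_and, not_lt]
  exact le_of_lt

lemma mem_inversions_trans {w : Perm (Fin m)} {a b c : Fin m} (hab : (a, b) ∈ inversions w)
    (hbc : (b, c) ∈ inversions w) : (a, c) ∈ inversions w :=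
  ⟨hab.1.trans hbc.1, hbc.2.trans hab.2⟩

lemma mem_inversions_sort {α : Type*} [LinearOrder α] {f : Fin m → α} (hf : Injective f)
    {i j : Fin m} : (i, j) ∈ inversions (Tuple.sort f) ↔ i < j ∧ f j < f i := by
  have hmono : StrictMono (f ∘ Tuple.sort f) :=
    (Tuple.monotone_sort f).strictMono_of_injective (hf.comp (Tuple.sort f).injective)
  have key : ∀ x, f x = (f ∘ Tuple.sort f) ((Tuple.sort f)⁻¹ x) := fun x => by simp
  simp only [inversions, Set.mem_ofPred_eq, key j, key i, hmono.lt_iff_lt]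

lemma le_and_le_of_mem_inversions_swap {i j x y : Fin m} (hij : i ≤ j)
    (h : (x, y) ∈ inversions (swap i j)) : i ≤ x ∧ y ≤ j := by
  obtain ⟨hxy, hlt⟩ := h
  simp only [swap_inv, swap_apply_def] at hlt
  split_ifs at hlt <;> simp_all only [Fin.lt_def, Fin.le_def, Fin.ext_iff] <;> omega

lemma mem_inversions_swap {i j : Fin m} (hij : i < j) : (i, j) ∈ inversions (swap i j) :=
  ⟨hij, by simpa using hij⟩

lemma mem_inversions_revPerm {i j : Fin m} : (i, j) ∈ inversions Fin.revPerm ↔ i < j := by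
  simp only [inversions, Set.mem_ofPred_eq, Perm.inv_def, Fin.revPerm_symm, Fin.revPerm_apply,
    Fin.rev_lt_rev, and_self]

end Inversions

def IsWeakOrder (m : ℕ) [Lattice (Perm (Fin m))] : Prop :=
  ∀ u v : Perm (Fin m), u ≤ v ↔ inversions u ⊆ inversions v

namespace IsWeakOrder

variable {m : ℕ} [Lattice (Perm (Fin m))] (hle : IsWeakOrder m)
include hle

lemma ext {u v : Perm (Fin m)} (h : inversions u = inversions v) : u = v :=
  le_antisymm ((hle u v).2 h.le) ((hle v u).2 h.ge)

lemma one_le (w : Perm (Fin m)) : 1 ≤ w :=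
  (hle 1 w).2 (by simp [inversions_one])

lemma inversions_subset_sup_left (u v : Perm (Fin m)) : inversions u ⊆ inversions (u ⊔ v) :=
  (hle _ _).1 le_sup_left

lemma inversions_subset_sup_right (u v : Perm (Fin m)) : inversions v ⊆ inversions (u ⊔ v) :=
  (hle _ _).1 le_sup_right

lemma inf_eq_one_of_disjoint {u v : Perm (Fin m)} (h : Disjoint (inversions u) (inversions v)) :
    u ⊓ v = 1 := by
  refine le_antisymm ((hle _ _).2 ?_) (hle.one_le _)
  rw [inversions_one, ← Set.disjoint_iff_inter_eq_empty.1 h]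
  exact Set.subset_inter ((hle _ _).1 inf_le_left) ((hle _ _).1 inf_le_right)

end IsWeakOrder

namespace IsLatticeCongruence

variable {α : Type*} [Lattice α] {r : α → α → Prop}

lemma sup_left (hr : IsLatticeCongruence r) {a b : α} (h : r a b) (c : α) :
    r (c ⊔ a) (c ⊔ b) :=
  hr.2.1 _ _ _ _ (hr.1.refl c) h

lemma inf_right (hr : IsLatticeCongruence r) {a b : α} (h : r a b) (c : α) :
    r (a ⊓ c) (b ⊓ c) :=
  hr.2.2 _ _ _ _ h (hr.1.refl c)

lemma of_le_sup (hr : IsLatticeCongruence r) {a b c d : α} (h : r a b) (hac : a ≤ c)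
    (hcd : c ⊓ d = a) (hd : d ≤ c ⊔ b) : r a d := by
  have hc : r c (c ⊔ b) := by simpa only [sup_eq_left.2 hac] using hr.sup_left h c
  simpa only [hcd, inf_eq_right.2 hd] using hr.inf_right hc d

lemma ker {β : Type*} [Lattice β] {f : α → β} (hsup : ∀ a b, f (a ⊔ b) = f a ⊔ f b)
    (hinf : ∀ a b, f (a ⊓ b) = f a ⊓ f b) : IsLatticeCongruence (fun a b => f a = f b) :=
  ⟨⟨fun _ => rfl, Eq.symm, Eq.trans⟩,
    fun a b c d hab hcd => by simp only [hsup, hab, hcd],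
    fun a b c d hab hcd => by simp only [hinf, hab, hcd]⟩

end IsLatticeCongruence

section Blocks

variable {m n k : ℕ}

def restrictValues (w : Perm (Fin n)) (ι : Fin m → Fin n) : Perm (Fin m) :=
  Tuple.sort (⇑w⁻¹ ∘ ι)

lemma mem_inversions_restrictValues {w : Perm (Fin n)} {ι : Fin m → Fin n} (hι : StrictMono ι)
    {i j : Fin m} :
    (i, j) ∈ inversions (restrictValues w ι) ↔ (ι i, ι j) ∈ inversions w := by
  rw [restrictValues, mem_inversions_sort (w⁻¹.injective.comp hι.injective), mem_inversions,
    hι.lt_iff_lt]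
  rfl

variable (hkn : k ≤ n)

def blockEquiv : Fin k ⊕ Fin (n - k) ≃ Fin n :=
  finSumFinEquiv.trans (finCongr (Nat.add_sub_cancel' hkn))

@[simp]
lemma blockEquiv_inl_val (i : Fin k) : (blockEquiv hkn (.inl i) : ℕ) = i := by
  simp [blockEquiv]

@[simp]
lemma blockEquiv_inr_val (s : Fin (n - k)) : (blockEquiv hkn (.inr s) : ℕ) = k + s := by
  simp [blockEquiv]

lemma blockEquiv_lt_blockEquiv {a b : Fin k ⊕ Fin (n - k)} :
    blockEquiv hkn a < blockEquiv hkn b ↔ toLex a < toLex b := by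
  rw [Fin.lt_def]
  rcases a with i | s <;> rcases b with j | t <;>
    simp only [blockEquiv_inl_val, blockEquiv_inr_val, Sum.Lex.inl_lt_inl_iff,
      Sum.Lex.inr_lt_inr_iff, Sum.Lex.inl_lt_inr, Sum.Lex.not_inr_lt_inl, Fin.lt_def, iff_true,
      iff_false, not_lt] <;> omega

lemma mem_inversions_sort_blockEquiv {α : Type*} [LinearOrder α]
    {κ : Fin k ⊕ Fin (n - k) → α} (hκ : Injective κ) {a b : Fin k ⊕ Fin (n - k)} :
    (blockEquiv hkn a, blockEquiv hkn b) ∈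
        inversions (Tuple.sort (κ ∘ (blockEquiv hkn).symm)) ↔
      toLex a < toLex b ∧ κ b < κ a := by
  rw [mem_inversions_sort (hκ.comp (blockEquiv hkn).symm.injective), blockEquiv_lt_blockEquiv]
  simp

end Blocks

section BlockPermutations

variable {n k : ℕ} (hkn : k ≤ n)

lemma inversions_subset_iff_blockEquiv {u v : Perm (Fin n)} :
    inversions u ⊆ inversions v ↔ ∀ a b,
      (blockEquiv hkn a, blockEquiv hkn b) ∈ inversions u →
        (blockEquiv hkn a, blockEquiv hkn b) ∈ inversions v := by
  refine ⟨fun h a b => @h _, fun h ⟨x, y⟩ hxy => ?_⟩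
  obtain ⟨a, rfl⟩ := (blockEquiv hkn).surjective x
  obtain ⟨b, rfl⟩ := (blockEquiv hkn).surjective y
  exact h a b hxy

lemma not_mem_inversions_inr_inl (w : Perm (Fin n)) (s : Fin (n - k)) (i : Fin k) :
    (blockEquiv hkn (.inr s), blockEquiv hkn (.inl i)) ∉ inversions w :=
  fun h => Sum.Lex.not_inr_lt_inl ((blockEquiv_lt_blockEquiv hkn).1 h.1)

def restrictBlocks (w : Perm (Fin n)) : Perm (Fin k) × Perm (Fin (n - k)) :=
  (restrictValues w (blockEquiv hkn ∘ .inl), restrictValues w (blockEquiv hkn ∘ .inr))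

@[simp]
lemma mem_inversions_restrictBlocks_fst {w : Perm (Fin n)} {i j : Fin k} :
    (i, j) ∈ inversions (restrictBlocks hkn w).1 ↔
      (blockEquiv hkn (.inl i), blockEquiv hkn (.inl j)) ∈ inversions w :=
  mem_inversions_restrictValues fun _ _ h =>
    (blockEquiv_lt_blockEquiv hkn).2 (Sum.Lex.inl_lt_inl_iff.2 h)

@[simp]
lemma mem_inversions_restrictBlocks_snd {w : Perm (Fin n)} {s t : Fin (n - k)} :
    (s, t) ∈ inversions (restrictBlocks hkn w).2 ↔
      (blockEquiv hkn (.inr s), blockEquiv hkn (.inr t)) ∈ inversions w :=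
  mem_inversions_restrictValues fun _ _ h =>
    (blockEquiv_lt_blockEquiv hkn).2 (Sum.Lex.inr_lt_inr_iff.2 h)

lemma lex_of_mem_inversions {w : Perm (Fin n)} {a b : Fin k ⊕ Fin (n - k)}
    (h : (blockEquiv hkn a, blockEquiv hkn b) ∈ inversions w) :
    Sum.Lex (fun i j => (i, j) ∈ inversions (restrictBlocks hkn w).1)
      (fun s t => (s, t) ∈ inversions (restrictBlocks hkn w).2) a b := by
  rcases a with i | s <;> rcases b with j | t
  · exact Sum.Lex.inl (by simpa using h)
  · exact Sum.Lex.sep i t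
  · exact absurd h (not_mem_inversions_inr_inl hkn w s j)
  · exact Sum.Lex.inr (by simpa using h)

lemma mem_inversions_of_liftRel {w : Perm (Fin n)} {a b : Fin k ⊕ Fin (n - k)}
    (h : Sum.LiftRel (fun i j => (i, j) ∈ inversions (restrictBlocks hkn w).1)
      (fun s t => (s, t) ∈ inversions (restrictBlocks hkn w).2) a b) :
    (blockEquiv hkn a, blockEquiv hkn b) ∈ inversions w := by
  rcases h with ⟨h⟩ | ⟨h⟩ <;> simpa using h

/-- The direct sum `u ⊕ v` of `c = (u, v)`: small values first, in pattern `u`. -/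
def blockDiag (c : Perm (Fin k) × Perm (Fin (n - k))) : Perm (Fin n) :=
  Tuple.sort ((toLex ∘ Sum.map ⇑c.1⁻¹ ⇑c.2⁻¹) ∘ (blockEquiv hkn).symm)

/-- The skew sum of `c = (u, v)`: the large values, in pattern `v`, precede the small ones. -/
def blockAntidiag (c : Perm (Fin k) × Perm (Fin (n - k))) : Perm (Fin n) :=
  Tuple.sort ((toLex ∘ Sum.swap ∘ Sum.map ⇑c.1⁻¹ ⇑c.2⁻¹) ∘ (blockEquiv hkn).symm)

lemma mem_inversions_blockDiag {c : Perm (Fin k) × Perm (Fin (n - k))}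
    {a b : Fin k ⊕ Fin (n - k)} :
    (blockEquiv hkn a, blockEquiv hkn b) ∈ inversions (blockDiag hkn c) ↔
      Sum.LiftRel (fun i j => (i, j) ∈ inversions c.1)
        (fun s t => (s, t) ∈ inversions c.2) a b := by
  rw [blockDiag, mem_inversions_sort_blockEquiv hkn
    (toLex.injective.comp (Sum.map_injective.2 ⟨c.1⁻¹.injective, c.2⁻¹.injective⟩))]
  rcases a with i | s <;> rcases b with j | t <;> simp [mem_inversions]

lemma mem_inversions_blockAntidiag {c : Perm (Fin k) × Perm (Fin (n - k))}
    {a b : Fin k ⊕ Fin (n - k)} :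
    (blockEquiv hkn a, blockEquiv hkn b) ∈ inversions (blockAntidiag hkn c) ↔
      Sum.Lex (fun i j => (i, j) ∈ inversions c.1)
        (fun s t => (s, t) ∈ inversions c.2) a b := by
  rw [blockAntidiag, mem_inversions_sort_blockEquiv hkn (toLex.injective.comp
    (Sum.swap_leftInverse.injective.comp
      (Sum.map_injective.2 ⟨c.1⁻¹.injective, c.2⁻¹.injective⟩)))]
  rcases a with i | s <;> rcases b with j | t <;> simp [mem_inversions]

end BlockPermutations

section Quotient

variable {n k : ℕ} (hkn : k ≤ n) [Lattice (Perm (Fin k))] [Lattice (Perm (Fin (n - k)))]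

lemma restrictBlocks_blockDiag (hk : IsWeakOrder k) (hnk : IsWeakOrder (n - k))
    (c : Perm (Fin k) × Perm (Fin (n - k))) :
    restrictBlocks hkn (blockDiag hkn c) = c := by
  refine Prod.ext (hk.ext ?_) (hnk.ext ?_) <;> ext ⟨i, j⟩ <;> simp [mem_inversions_blockDiag]

variable [Lattice (Perm (Fin n))]

lemma gc_restrictBlocks_blockAntidiag (hn : IsWeakOrder n) (hk : IsWeakOrder k)
    (hnk : IsWeakOrder (n - k)) :
    GaloisConnection (restrictBlocks hkn) (blockAntidiag hkn) := by
  intro a c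
  rw [Prod.le_def, hk _ _, hnk _ _, hn _ _, inversions_subset_iff_blockEquiv hkn]
  constructor
  · rintro ⟨h1, h2⟩ p q hpq
    rw [mem_inversions_blockAntidiag]
    exact (lex_of_mem_inversions hkn hpq).mono (fun _ _ h => h1 h) (fun _ _ h => h2 h)
  · intro h
    refine ⟨fun ⟨i, j⟩ hij => ?_, fun ⟨s, t⟩ hst => ?_⟩
    · simpa [mem_inversions_blockAntidiag] using
        h _ _ ((mem_inversions_restrictBlocks_fst hkn).1 hij)
    · simpa [mem_inversions_blockAntidiag] using
        h _ _ ((mem_inversions_restrictBlocks_snd hkn).1 hst)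

lemma gc_blockDiag_restrictBlocks (hn : IsWeakOrder n) (hk : IsWeakOrder k)
    (hnk : IsWeakOrder (n - k)) :
    GaloisConnection (blockDiag hkn) (restrictBlocks hkn) := by
  intro c a
  rw [Prod.le_def, hk _ _, hnk _ _, hn _ _, inversions_subset_iff_blockEquiv hkn]
  constructor
  · intro h
    refine ⟨fun ⟨i, j⟩ hij => ?_, fun ⟨s, t⟩ hst => ?_⟩
    · exact (mem_inversions_restrictBlocks_fst hkn).2
        (h _ _ ((mem_inversions_blockDiag hkn).2 (Sum.LiftRel.inl hij)))
    · exact (mem_inversions_restrictBlocks_snd hkn).2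
        (h _ _ ((mem_inversions_blockDiag hkn).2 (Sum.LiftRel.inr hst)))
  · rintro ⟨h1, h2⟩ p q hpq
    exact mem_inversions_of_liftRel hkn
      (((mem_inversions_blockDiag hkn).1 hpq).mono (fun _ _ h => h1 h) (fun _ _ h => h2 h))

lemma sup_blockAntidiag_one (hn : IsWeakOrder n) (hk : IsWeakOrder k)
    (hnk : IsWeakOrder (n - k)) (a : Perm (Fin n)) :
    a ⊔ blockAntidiag hkn 1 = blockAntidiag hkn (restrictBlocks hkn a) := by
  have gc := gc_restrictBlocks_blockAntidiag hkn hn hk hnk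
  refine le_antisymm (sup_le (gc.le_u_l a) (gc.monotone_u ⟨hk.one_le _, hnk.one_le _⟩)) ?_
  refine (hn _ _).2 <| (inversions_subset_iff_blockEquiv hkn).2 fun p q hpq => ?_
  rcases (mem_inversions_blockAntidiag hkn).1 hpq with ⟨h⟩ | ⟨h⟩ | ⟨i, t⟩
  · exact hn.inversions_subset_sup_left _ _ ((mem_inversions_restrictBlocks_fst hkn).1 h)
  · exact hn.inversions_subset_sup_left _ _ ((mem_inversions_restrictBlocks_snd hkn).1 h)
  · exact hn.inversions_subset_sup_right _ _
      ((mem_inversions_blockAntidiag hkn).2 (Sum.Lex.sep i t))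

end Quotient

lemma disjoint_inversions_blockDiag_blockAntidiag_one {n k : ℕ} (hkn : k ≤ n)
    (c : Perm (Fin k) × Perm (Fin (n - k))) :
    Disjoint (inversions (blockDiag hkn c)) (inversions (blockAntidiag hkn 1)) := by
  rw [Set.disjoint_left]
  rintro ⟨x, y⟩ hdiag hanti
  obtain ⟨a, rfl⟩ := (blockEquiv hkn).surjective x
  obtain ⟨b, rfl⟩ := (blockEquiv hkn).surjective y
  rw [mem_inversions_blockAntidiag] at hanti
  rcases (mem_inversions_blockDiag hkn).1 hdiag with ⟨-⟩ | ⟨-⟩ <;>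
    simp [inversions_one] at hanti

section Collapse

variable {n k : ℕ} (hkn : k < n)

/-- The paper's `σ_k = (k, k+1)`, shifted to the `0`-based values of `Fin n`. -/
def boundarySwap : Perm (Fin n) :=
  swap ⟨k - 1, (Nat.sub_le k 1).trans_lt hkn⟩ ⟨k, hkn⟩

lemma lt_and_le_of_mem_inversions_boundarySwap {x y : Fin n}
    (h : (x, y) ∈ inversions (boundarySwap hkn)) :
    (x : ℕ) < k ∧ k ≤ y := by
  have hb := le_and_le_of_mem_inversions_swap (Fin.mk_le_mk.2 (Nat.sub_le k 1)) h
  have hxy := h.1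
  simp only [Fin.le_def, Fin.lt_def] at hb hxy
  omega

lemma restrictBlocks_boundarySwap [Lattice (Perm (Fin k))] [Lattice (Perm (Fin (n - k)))]
    (hk : IsWeakOrder k) (hnk : IsWeakOrder (n - k)) :
    restrictBlocks hkn.le (boundarySwap hkn) = restrictBlocks hkn.le 1 := by
  refine Prod.ext (hk.ext ?_) (hnk.ext ?_) <;> ext ⟨i, j⟩ <;>
    simp only [mem_inversions_restrictBlocks_fst, mem_inversions_restrictBlocks_snd,
      inversions_one, Set.mem_empty_iff_false, iff_false] <;>
    intro h
  · have := lt_and_le_of_mem_inversions_boundarySwap hkn h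
    simp only [blockEquiv_inl_val] at this
    omega
  · have := lt_and_le_of_mem_inversions_boundarySwap hkn h
    simp only [blockEquiv_inr_val] at this
    omega

variable [Lattice (Perm (Fin n))] (hn : IsWeakOrder n)
include hn

lemma blockAntidiag_one_le_blockDiag_revPerm_sup_boundarySwap :
    blockAntidiag hkn.le 1 ≤
      blockDiag hkn.le (Fin.revPerm, Fin.revPerm) ⊔ boundarySwap hkn := by
  refine (hn _ _).2 <| (inversions_subset_iff_blockEquiv hkn.le).2 fun p q hpq => ?_
  rcases (mem_inversions_blockAntidiag hkn.le).1 hpq with ⟨h⟩ | ⟨h⟩ | ⟨i, t⟩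
  · simp [inversions_one] at h
  · simp [inversions_one] at h
  set J := blockDiag hkn.le (Fin.revPerm, Fin.revPerm) ⊔ boundarySwap hkn
  have hk1 : 1 ≤ k := Fin.pos i
  let i₀ : Fin k := ⟨k - 1, by omega⟩
  let t₀ : Fin (n - k) := ⟨0, Fin.pos t⟩
  have hmid : (blockEquiv hkn.le (.inl i₀), blockEquiv hkn.le (.inr t₀)) ∈ inversions J := by
    have hi₀ : blockEquiv hkn.le (.inl i₀) = ⟨k - 1, by omega⟩ := Fin.ext (by simp [i₀])
    have ht₀ : blockEquiv hkn.le (.inr t₀) = ⟨k, hkn⟩ := Fin.ext (by simp [t₀])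
    rw [hi₀, ht₀]
    exact hn.inversions_subset_sup_right _ _ (mem_inversions_swap (Fin.mk_lt_mk.2 (by omega)))
  have hdiag : ∀ {a b : Fin k ⊕ Fin (n - k)}, Sum.LiftRel (· < ·) (· < ·) a b →
      (blockEquiv hkn.le a, blockEquiv hkn.le b) ∈ inversions J := fun h =>
    hn.inversions_subset_sup_left _ _ ((mem_inversions_blockDiag hkn.le).2
      (h.mono (fun _ _ => mem_inversions_revPerm.2) (fun _ _ => mem_inversions_revPerm.2)))
  have hleft : (blockEquiv hkn.le (.inl i), blockEquiv hkn.le (.inr t₀)) ∈ inversions J := by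
    rcases eq_or_lt_of_le (show i ≤ i₀ from Fin.le_def.2 (by simp [i₀]; omega)) with hi | hlt
    · rwa [hi]
    · exact mem_inversions_trans (hdiag (.inl hlt)) hmid
  rcases eq_or_lt_of_le (show t₀ ≤ t from Fin.le_def.2 (Nat.zero_le _)) with ht | hlt
  · rwa [← ht]
  · exact mem_inversions_trans hleft (hdiag (.inr hlt))

variable {r : Perm (Fin n) → Perm (Fin n) → Prop} (hr : IsLatticeCongruence r)
  (hσ : r 1 (boundarySwap hkn))
include hr hσ

lemma IsLatticeCongruence.rel_one_blockAntidiag_one : r 1 (blockAntidiag hkn.le 1) :=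
  hr.of_le_sup hσ (hn.one_le _)
    (hn.inf_eq_one_of_disjoint (disjoint_inversions_blockDiag_blockAntidiag_one hkn.le _))
    (blockAntidiag_one_le_blockDiag_revPerm_sup_boundarySwap hkn hn)

lemma IsLatticeCongruence.rel_blockAntidiag_restrictBlocks [Lattice (Perm (Fin k))]
    [Lattice (Perm (Fin (n - k)))] (hk : IsWeakOrder k) (hnk : IsWeakOrder (n - k))
    (a : Perm (Fin n)) : r a (blockAntidiag hkn.le (restrictBlocks hkn.le a)) := by
  rw [← sup_blockAntidiag_one hkn.le hn hk hnk a]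
  simpa only [sup_eq_left.2 (hn.one_le a)] using
    hr.sup_left (hr.rel_one_blockAntidiag_one hkn hn hσ) a

end Collapse

/-- For `1 ≤ k < n`, the quotient of the permutohedron `S_n` (the lattice of
permutations of `[n]` whose order is the weak Bruhat order, i.e. inclusion of
inversion sets) by the lattice congruence `θ(⊥, σ_k)` generated by identifying the
identity with the adjacent transposition `σ_k = (k, k+1)` is isomorphic, as a lattice,
to the product `S_k × S_{n-k}`. -/
theorem stmt13 (n k : ℕ) (hkn : k < n)
    [Lattice (Equiv.Perm (Fin n))] [Lattice (Equiv.Perm (Fin k))]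
    [Lattice (Equiv.Perm (Fin (n - k)))]
    (hn : ∀ u v : Equiv.Perm (Fin n), u ≤ v ↔ inversions u ⊆ inversions v)
    (hk : ∀ u v : Equiv.Perm (Fin k), u ≤ v ↔ inversions u ⊆ inversions v)
    (hnk : ∀ u v : Equiv.Perm (Fin (n - k)), u ≤ v ↔ inversions u ⊆ inversions v) :
    ∃ f : Equiv.Perm (Fin n) → Equiv.Perm (Fin k) × Equiv.Perm (Fin (n - k)),
      Function.Surjective f ∧
      (∀ a b, f a = f b ↔
        congGen 1 (Equiv.swap (⟨k - 1, by omega⟩ : Fin n) (⟨k, hkn⟩ : Fin n)) a b) ∧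
      (∀ a b, f (a ⊔ b) = f a ⊔ f b) ∧ (∀ a b, f (a ⊓ b) = f a ⊓ f b) := by
  have gc := gc_restrictBlocks_blockAntidiag hkn.le hn hk hnk
  have gc' := gc_blockDiag_restrictBlocks hkn.le hn hk hnk
  refine ⟨restrictBlocks hkn.le, fun c => ⟨_, restrictBlocks_blockDiag hkn.le hk hnk c⟩,
    fun a b => ⟨fun hab r hr hσ => ?_, fun hab => ?_⟩,
    fun _ _ => gc.l_sup, fun _ _ => gc'.u_inf⟩
  · have ha := hr.rel_blockAntidiag_restrictBlocks hkn hn hσ hk hnk a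
    have hb := hr.rel_blockAntidiag_restrictBlocks hkn hn hσ hk hnk b
    rw [hab] at ha
    exact hr.1.trans ha (hr.1.symm hb)
  · exact hab _ (IsLatticeCongruence.ker (fun _ _ => gc.l_sup) (fun _ _ => gc'.u_inf))
      (restrictBlocks_boundarySwap hkn hk hnk).symm
end

section
/- Let v ∈ [n]^n be a bracketing vector and k ∈ [n-1] a split of v. Define v^k by v^k_i = v_{v_k + 1} if i = k and v^k_i = v_i otherwise. Then v^k is again a bracketing vector. -/
/-- A bracketing vector: `i ≤ v i` and `i < j ≤ v i` implies `v j ≤ v i`. -/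
def IsBracketing {n : ℕ} (v : Fin n → Fin n) : Prop :=
  (∀ i, i ≤ v i) ∧ ∀ i j : Fin n, i < j → j ≤ v i → v j ≤ v i

/-- `k ∈ [n-1]` is a split of `v`: whenever `i < k ≤ v i` we have `v (v k + 1) ≤ v i`
(the split condition forces `v k + 1` to be a valid index). -/
structure IsSplit {n : ℕ} (v : Fin n → Fin n) (k : Fin n) : Prop where
  hk : (k : ℕ) + 1 < n
  hvk : (v k : ℕ) + 1 < n
  cond : ∀ i : Fin n, i < k → k ≤ v i → v ⟨(v k : ℕ) + 1, hvk⟩ ≤ v i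

/-- The vector `v^k`: agrees with `v` except `v^k k = v (v k + 1)`. -/
def splitStep {n : ℕ} (v : Fin n → Fin n) (k : Fin n) (h : (v k : ℕ) + 1 < n) :
    Fin n → Fin n := fun i => if i = k then v ⟨(v k : ℕ) + 1, h⟩ else v i

/-!
Writing `m = v k + 1`, the vector `v^k` is `v` with the single entry at `k` replaced by
`v m`. Replacing `v k` by a value `a ≥ k` keeps `v` bracketing as soon as every `j` with
`k < j ≤ a` has `v j ≤ a` and every `i < k ≤ v i` has `a ≤ v i`. For `a = v m` the second
condition is exactly the split condition, and the first follows from `v` being bracketing: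
an index `k < j ≤ v k` has `v j ≤ v k < m ≤ v m`, and an index `m ≤ j ≤ v m` has
`v j ≤ v m` by the bracketing condition at `m`.
-/

namespace IsBracketing

variable {n : ℕ} {v : Fin n → Fin n}

theorem apply_le_of_le_apply (hb : IsBracketing v) {i j : Fin n} (hij : i ≤ j)
    (hj : j ≤ v i) : v j ≤ v i := by
  rcases hij.eq_or_lt with rfl | hlt
  · exact le_rfl
  · exact hb.2 i j hlt hj

theorem update (hb : IsBracketing v) {k a : Fin n} (hka : k ≤ a)
    (right : ∀ j, k < j → j ≤ a → v j ≤ a) (left : ∀ i, i < k → k ≤ v i → a ≤ v i) :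
    IsBracketing (Function.update v k a) := by
  refine ⟨fun i => ?_, fun i j hij hj => ?_⟩
  · rcases eq_or_ne i k with rfl | hi
    · simpa using hka
    · simpa [hi] using hb.1 i
  · rcases eq_or_ne i k with rfl | hi
    · simp only [Function.update_self, Function.update_of_ne hij.ne'] at hj ⊢
      exact right j hij hj
    · rcases eq_or_ne j k with rfl | hjk
      · simp only [Function.update_self, Function.update_of_ne hi] at hj ⊢
        exact left i hij hj
      · simp only [Function.update_of_ne hi, Function.update_of_ne hjk] at hj ⊢
        exact hb.2 i j hij hj

theorem apply_lt_apply_succ_apply (hb : IsBracketing v) (k : Fin n)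
    (h : (v k : ℕ) + 1 < n) : v k < v ⟨(v k : ℕ) + 1, h⟩ :=
  Fin.lt_of_lt_of_le (Fin.lt_def.mpr (Nat.lt_succ_self _)) (hb.1 _)

theorem apply_le_apply_succ_apply (hb : IsBracketing v) {k j : Fin n}
    (h : (v k : ℕ) + 1 < n) (hkj : k < j) (hj : j ≤ v ⟨(v k : ℕ) + 1, h⟩) :
    v j ≤ v ⟨(v k : ℕ) + 1, h⟩ := by
  rcases le_or_gt j (v k) with hjk | hkj'
  · exact (hb.2 k j hkj hjk).trans (hb.apply_lt_apply_succ_apply k h).le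
  · exact hb.apply_le_of_le_apply (Fin.le_def.mpr hkj') hj

end IsBracketing

theorem splitStep_eq_update {n : ℕ} (v : Fin n → Fin n) (k : Fin n)
    (h : (v k : ℕ) + 1 < n) :
    splitStep v k h = Function.update v k (v ⟨(v k : ℕ) + 1, h⟩) := by
  funext i
  simp only [splitStep, Function.update_apply]

/-- If `k` is a split of the bracketing vector `v`, then `v^k` is again a bracketing
vector. -/
theorem stmt14 (n : ℕ) (v : Fin n → Fin n) (k : Fin n)
    (hb : IsBracketing v) (hs : IsSplit v k) :
    IsBracketing (splitStep v k hs.hvk) := by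
  rw [splitStep_eq_update]
  exact hb.update ((hb.1 k).trans (hb.apply_lt_apply_succ_apply k hs.hvk).le)
    (fun _ hkj hj => hb.apply_le_apply_succ_apply hs.hvk hkj hj) hs.cond
end

section
/- Let v be a bracketing vector of length n and k ∈ [n-1] a split of v with v_k = k such that k is the only index i with v_i = k. Then ψ(v,k) := δ_k ∘ v ∘ σ̂_k (as a function [n-1] → [n-1]) is again a bracketing vector, i.e. it satisfies i ≤ ψ(v,k)_i and (i < j ≤ ψ(v,k)_i ⟹ ψ(v,k)_j ≤ ψ(v,k)_i). -/
/-!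
Away from the value `k`, the maps `σ̂_k` and `δ_k` form a Galois connection:
`σ̂_k y ≤ a ↔ y ≤ δ_k a` whenever `a ≠ k`. Since `v` takes the value `k` only at `k`, which
is not in the image of `σ̂_k`, both bracketing conditions for `δ_k ∘ v ∘ σ̂_k` can be moved
across this connection to the corresponding conditions for `v`, using that `σ̂_k` is strictly
monotone and `δ_k` is monotone.
-/

namespace Fin

theorem castSucc_succAbove_le_iff_le_predAbove {n : ℕ} {k : Fin n} {a : Fin (n + 1)}
    (ha : a ≠ k.castSucc) {y : Fin n} : k.castSucc.succAbove y ≤ a ↔ y ≤ k.predAbove a := by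
  rcases ha.lt_or_gt with ha | ha
  · rw [predAbove_of_le_castSucc _ _ ha.le, le_castPred_iff]
    rcases lt_or_ge y k with hy | hy
    · rw [succAbove_of_castSucc_lt _ _ (castSucc_lt_castSucc_iff.mpr hy)]
    · rw [succAbove_castSucc_of_le _ _ hy]
      simp only [lt_def, le_def, val_castSucc, val_succ] at *
      omega
  · rw [predAbove_of_castSucc_lt _ _ ha, le_pred_iff]
    rcases lt_or_ge y k with hy | hy
    · rw [succAbove_of_castSucc_lt _ _ (castSucc_lt_castSucc_iff.mpr hy)]
      simp only [lt_def, le_def, val_castSucc, val_succ] at *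
      omega
    · rw [succAbove_castSucc_of_le _ _ hy]

end Fin

theorem stmt17_general (n : ℕ) (v : Fin (n + 1) → Fin (n + 1)) (k : Fin n)
    (hb : IsBracketing v)
    (huniq : ∀ i, v i = k.castSucc → i = k.castSucc) :
    IsBracketing (fun x : Fin n => k.predAbove (v (k.castSucc.succAbove x))) := by
  obtain ⟨hge, hnest⟩ := hb
  have hne : ∀ x, v (k.castSucc.succAbove x) ≠ k.castSucc := fun x h =>
    Fin.succAbove_ne _ x (huniq _ h)
  refine ⟨fun x => (Fin.castSucc_succAbove_le_iff_le_predAbove (hne x)).mp (hge _),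
    fun x y hxy hyx => Fin.predAbove_right_monotone k ?_⟩
  exact hnest _ _ (Fin.strictMono_succAbove _ hxy)
    ((Fin.castSucc_succAbove_le_iff_le_predAbove (hne x)).mpr hyx)

/-- If `k` is a split of the bracketing vector `v` with `v k = k` and `k` the unique
index with value `k`, then `ψ(v,k) = δ_k ∘ v ∘ σ̂_k` is again a bracketing vector. -/
theorem stmt17 (n : ℕ) (v : Fin (n + 1) → Fin (n + 1)) (k : Fin n)
    (hb : IsBracketing v) (hs : IsSplit v k.castSucc)
    (hvk : v k.castSucc = k.castSucc)
    (huniq : ∀ i, v i = k.castSucc → i = k.castSucc) :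
    IsBracketing (fun x : Fin n => k.predAbove (v (k.castSucc.succAbove x))) :=
  stmt17_general n v k hb huniq
end

section
/- Let v be a bracketing vector of length n with v_k = k and v_i ≠ k for i ≠ k, and set ψ = δ_k ∘ v ∘ σ̂_k. Then for j ∈ [n-2], j is a split of the bracketing vector ψ if and only if σ̂_k(j) is a split of v. -/
namespace Fin

variable {n : ℕ}

lemma val_castSucc_succAbove (k j : Fin n) :
    (k.castSucc.succAbove j : ℕ) = if (j : ℕ) < k then (j : ℕ) else (j : ℕ) + 1 := by
  split_ifs with h
  · rw [succAbove_castSucc_of_lt _ _ h, val_castSucc]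
  · rw [succAbove_castSucc_of_le _ _ (not_lt.mp h), val_succ]

lemma val_predAbove_of_ne {k : Fin n} {w : Fin (n + 1)} (hw : w ≠ k.castSucc) :
    (k.predAbove w : ℕ) = if (w : ℕ) < k then (w : ℕ) else (w : ℕ) - 1 := by
  have hw' : (w : ℕ) ≠ k := fun h => hw (Fin.ext h)
  split_ifs with h
  · rw [predAbove_of_le_castSucc _ _ (le_of_lt h), coe_castPred]
  · rw [predAbove_of_castSucc_lt _ _ (by rw [lt_def, val_castSucc]; omega), val_pred]

lemma castSucc_succAbove_add_one_lt_iff (k j : Fin n) :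
    (k.castSucc.succAbove j : ℕ) + 1 < n + 1 ↔ (j : ℕ) + 1 < n := by
  rw [val_castSucc_succAbove]
  split_ifs <;> omega

lemma predAbove_add_one_lt_iff {k : Fin n} {w : Fin (n + 1)} (hw : w ≠ k.castSucc) :
    (k.predAbove w : ℕ) + 1 < n ↔ (w : ℕ) + 1 < n + 1 := by
  have hne : (w : ℕ) ≠ k := fun h => hw (Fin.ext h)
  rw [val_predAbove_of_ne hw]
  split_ifs <;> omega

lemma castSucc_succAbove_predAbove_add_one {k : Fin n} {w : Fin (n + 1)} (hw : w ≠ k.castSucc)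
    (hw' : (w : ℕ) + 1 ≠ k) (h : (k.predAbove w : ℕ) + 1 < n) (h' : (w : ℕ) + 1 < n + 1) :
    k.castSucc.succAbove ⟨k.predAbove w + 1, h⟩ = ⟨w + 1, h'⟩ := by
  have hne : (w : ℕ) ≠ k := fun h => hw (Fin.ext h)
  have hval := val_predAbove_of_ne hw
  ext
  rw [val_castSucc_succAbove]
  dsimp only
  split_ifs at hval ⊢ <;> omega

end Fin

lemma IsBracketing.le_apply_iff {n : ℕ} {v : Fin n → Fin n} (hb : IsBracketing v) {i a : Fin n}
    (h : i < a) : a ≤ v i ↔ v a ≤ v i :=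
  ⟨hb.2 i a h, (hb.1 a).trans⟩

/-- `ψ = δ_k ∘ v ∘ σ̂_k`, with `σ̂_k = k.castSucc.succAbove` and `δ_k = k.predAbove`. -/
def contractAt {n : ℕ} (v : Fin (n + 1) → Fin (n + 1)) (k : Fin n) : Fin n → Fin n :=
  fun x => k.predAbove (v (k.castSucc.succAbove x))

section contractAt

variable {n : ℕ} {v : Fin (n + 1) → Fin (n + 1)} {k : Fin n}

lemma apply_succAbove_ne (huniq : ∀ i, v i = k.castSucc → i = k.castSucc) (x : Fin n) :
    v (k.castSucc.succAbove x) ≠ k.castSucc :=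
  fun h => k.castSucc.succAbove_ne x (huniq _ h)

lemma succAbove_contractAt (huniq : ∀ i, v i = k.castSucc → i = k.castSucc) (x : Fin n) :
    k.castSucc.succAbove (contractAt v k x) = v (k.castSucc.succAbove x) :=
  Fin.succAbove_predAbove (apply_succAbove_ne huniq x)

lemma contractAt_le_contractAt_iff (huniq : ∀ i, v i = k.castSucc → i = k.castSucc)
    {x y : Fin n} :
    contractAt v k x ≤ contractAt v k y ↔
      v (k.castSucc.succAbove x) ≤ v (k.castSucc.succAbove y) := by
  rw [← Fin.succAbove_le_succAbove_iff (p := k.castSucc), succAbove_contractAt huniq,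
    succAbove_contractAt huniq]

lemma le_contractAt_iff (huniq : ∀ i, v i = k.castSucc → i = k.castSucc) {j x : Fin n} :
    j ≤ contractAt v k x ↔ k.castSucc.succAbove j ≤ v (k.castSucc.succAbove x) := by
  rw [← Fin.succAbove_le_succAbove_iff (p := k.castSucc), succAbove_contractAt huniq]

lemma exists_succAbove_eq_of_lt_of_le_apply (hvk : v k.castSucc = k.castSucc)
    {i a : Fin (n + 1)} (h : i < a) (ha : a ≤ v i) : ∃ x, k.castSucc.succAbove x = i :=
  Fin.exists_succAbove_eq fun hi => by
    subst hi
    rw [hvk] at ha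
    exact not_lt.2 ha h

lemma contractAt_next_le_iff (hb : IsBracketing v) (hvk : v k.castSucc = k.castSucc)
    (huniq : ∀ i, v i = k.castSucc → i = k.castSucc) {j x : Fin n} (hx : x < j)
    (h : (contractAt v k j : ℕ) + 1 < n) (h' : (v (k.castSucc.succAbove j) : ℕ) + 1 < n + 1) :
    contractAt v k ⟨contractAt v k j + 1, h⟩ ≤ contractAt v k x ↔
      v ⟨v (k.castSucc.succAbove j) + 1, h'⟩ ≤ v (k.castSucc.succAbove x) := by
  rw [contractAt_le_contractAt_iff huniq]
  by_cases hedge : (v (k.castSucc.succAbove j) : ℕ) + 1 = k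
  · -- The successor of `ψ j` is `k`, which `σ̂_k` sends to `k + 1` rather than to
    -- `v (σ̂_k j) + 1 = k`; bracketing at `σ̂_k x < k + 1` compares `v (k + 1)` with `v k = k`.
    have hψj : (contractAt v k j : ℕ) = v (k.castSucc.succAbove j) := by
      rw [contractAt, Fin.val_predAbove_of_ne (apply_succAbove_ne huniq j), if_pos (by omega)]
    have hnext : (⟨contractAt v k j + 1, h⟩ : Fin n) = k := Fin.ext (by simp only; omega)
    have hnext' : (⟨v (k.castSucc.succAbove j) + 1, h'⟩ : Fin (n + 1)) = k.castSucc :=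
      Fin.ext (by simp only [Fin.val_castSucc]; omega)
    have hxk : k.castSucc.succAbove x < k.succ := by
      have hlt := lt_of_lt_of_le (Fin.succAbove_lt_succAbove_iff.2 hx)
        (hb.1 (k.castSucc.succAbove j))
      rw [Fin.lt_def] at hlt ⊢
      rw [Fin.val_succ]
      omega
    rw [hnext, hnext', Fin.succAbove_castSucc_self, hvk, ← hb.le_apply_iff hxk,
      ← Fin.castSucc_lt_iff_succ_le, lt_iff_le_and_ne]
    exact and_iff_left (apply_succAbove_ne huniq x).symm
  · have hnext : k.castSucc.succAbove ⟨contractAt v k j + 1, h⟩ = ⟨_, h'⟩ :=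
      Fin.castSucc_succAbove_predAbove_add_one (apply_succAbove_ne huniq j) hedge h h'
    rw [hnext]

end contractAt

theorem stmt18_general (n : ℕ) (v : Fin (n + 1) → Fin (n + 1)) (k : Fin n)
    (hb : IsBracketing v)
    (hvk : v k.castSucc = k.castSucc)
    (huniq : ∀ i, v i = k.castSucc → i = k.castSucc) (j : Fin n) :
    IsSplit (fun x : Fin n => k.predAbove (v (k.castSucc.succAbove x))) j ↔
      IsSplit v (k.castSucc.succAbove j) := by
  have hψ := Fin.predAbove_add_one_lt_iff (apply_succAbove_ne huniq j)
  constructor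
  · rintro ⟨hj, hψj, hcond⟩
    have hvj := hψ.1 hψj
    refine ⟨(Fin.castSucc_succAbove_add_one_lt_iff k j).2 hj, hvj, fun i hi hji => ?_⟩
    obtain ⟨x, rfl⟩ := exists_succAbove_eq_of_lt_of_le_apply hvk hi hji
    have hx := Fin.succAbove_lt_succAbove_iff.1 hi
    exact (contractAt_next_le_iff hb hvk huniq hx hψj hvj).1
      (hcond x hx ((le_contractAt_iff huniq).2 hji))
  · rintro ⟨hj, hvj, hcond⟩
    have hψj := hψ.2 hvj
    refine ⟨(Fin.castSucc_succAbove_add_one_lt_iff k j).1 hj, hψj, fun x hx hjx => ?_⟩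
    exact (contractAt_next_le_iff hb hvk huniq hx hψj hvj).2
      (hcond _ (Fin.succAbove_lt_succAbove_iff.2 hx) ((le_contractAt_iff huniq).1 hjx))

/-- With `v` a bracketing vector, `k` a split of `v`, `v k = k` and `v i ≠ k` for
`i ≠ k`, and `ψ = δ_k ∘ v ∘ σ̂_k`:  `j` is a split of `ψ` iff `σ̂_k(j)` is a split
of `v`. -/
theorem stmt18 (n : ℕ) (v : Fin (n + 1) → Fin (n + 1)) (k : Fin n)
    (hb : IsBracketing v) (hs : IsSplit v k.castSucc)
    (hvk : v k.castSucc = k.castSucc)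
    (huniq : ∀ i, v i = k.castSucc → i = k.castSucc) (j : Fin n) :
    IsSplit (fun x : Fin n => k.predAbove (v (k.castSucc.succAbove x))) j ↔
      IsSplit v (k.castSucc.succAbove j) :=
  stmt18_general n v k hb hvk huniq j
end

section
/- Let α be an atomic cover (⊥, a) of a finite distributive lattice L, where a is an atom. Then the map x ↦ (x, x ∨ a) is an order isomorphism from the lower set {x ∈ L : a ≰ x} onto the set of covering pairs of L perspective to (⊥, a), ordered componentwise; in particular, for every x with a ≰ x, the pair x ⋖ x ∨ a is a covering pair. -/
section PerspectiveCovers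

variable {L : Type*} [Lattice L] [OrderBot L] [IsUpperModularLattice L] {a : L}

/-- Since `x ⊓ a = ⊥ ⋖ a`, upper modularity transports the cover `⊥ ⋖ a` to `x ⋖ x ⊔ a`. -/
theorem IsAtom.covBy_sup_of_not_le (ha : IsAtom a) {x : L} (hax : ¬a ≤ x) : x ⋖ x ⊔ a := by
  have hinf : x ⊓ a = ⊥ := (ha.not_le_iff_disjoint.mp hax).symm.eq_bot
  exact covBy_sup_of_inf_covBy_right (hinf ▸ ha.bot_covBy)

def IsAtom.perspectiveCoversIso (ha : IsAtom a) :
    {x : L // ¬a ≤ x} ≃o {p : L × L // p.1 ⋖ p.2 ∧ ¬a ≤ p.1 ∧ p.2 = p.1 ⊔ a} where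
  toFun x := ⟨(x.1, x.1 ⊔ a), ha.covBy_sup_of_not_le x.2, x.2, rfl⟩
  invFun p := ⟨p.1.1, p.2.2.1⟩
  left_inv _ := rfl
  right_inv p := Subtype.ext (Prod.ext rfl p.2.2.2.symm)
  map_rel_iff' {x y} :=
    show (x.1 ≤ y.1 ∧ x.1 ⊔ a ≤ y.1 ⊔ a) ↔ x.1 ≤ y.1 from
      and_iff_left_of_imp (sup_le_sup_right · a)

end PerspectiveCovers

theorem stmt19_general (L : Type*) [DistribLattice L] [OrderBot L]
    (a : L) (ha : IsAtom a) :
    (∀ x : L, ¬a ≤ x → x ⋖ x ⊔ a) ∧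
    ∃ f : {x : L // ¬a ≤ x} ≃o
        {p : L × L // p.1 ⋖ p.2 ∧ ¬a ≤ p.1 ∧ p.2 = p.1 ⊔ a},
      ∀ x : {x : L // ¬a ≤ x}, (f x : L × L) = (x.1, x.1 ⊔ a) :=
  ⟨fun _ => ha.covBy_sup_of_not_le, ha.perspectiveCoversIso, fun _ => rfl⟩

/-- Let `a` be an atom of a finite distributive lattice `L`.  Then for every `x` with
`a ≰ x` the pair `x ⋖ x ⊔ a` is a covering pair, and `x ↦ (x, x ⊔ a)` is an order
isomorphism from the lower set `{x : a ≰ x}` onto the set of covering pairs of `L`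
perspective to `(⊥, a)` (those `(x, y)` with `x ⋖ y`, `a ≰ x`, `y = x ⊔ a`), ordered
componentwise. -/
theorem stmt19 (L : Type*) [DistribLattice L] [Fintype L] [OrderBot L]
    (a : L) (ha : IsAtom a) :
    (∀ x : L, ¬a ≤ x → x ⋖ x ⊔ a) ∧
    ∃ f : {x : L // ¬a ≤ x} ≃o
        {p : L × L // p.1 ⋖ p.2 ∧ ¬a ≤ p.1 ∧ p.2 = p.1 ⊔ a},
      ∀ x : {x : L // ¬a ≤ x}, (f x : L × L) = (x.1, x.1 ⊔ a) :=
  stmt19_general L a ha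
end
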